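/- arXiv:1710.07749 — 4 statements merged into one kernel-verified Lean document; each statement's English description precedes it below -/
import Mathlib

section
/- Let F be a field, n a natural number, and Δ a real number. Suppose given a bigraded algebra over F with degree shift n, i.e. F-vector spaces A(k,l) for each positive integer k and each integer l, together with F-bilinear multiplication maps A(k,l) × A(k',l') → A(k+k', l+l'−n). Assume the support condition: for every positive integer k and every integer l, if A(k,l) ≠ 0 then kΔ − n ≤ l < kΔ + n. Then the algebra is non-uniformly nilpotent: for every positive integer N there exists a positive integer m such that for every r ≥ m and all homogeneous elements w_1,…,w_r with w_i ∈ A(k_i,l_i) and k_i ≤ N for all i, the product w_1·w_2·⋯·w_r is zero. -/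
/-- The left-nested product `(…((w 0) * (w 1)) * …) * (w (r-1))` of a family of
`r` elements of a (possibly non-associative, non-unital) ring, with junk value `0`
for the empty family. -/
def nprod {V : Type*} [Mul V] [Zero V] : ∀ {r : ℕ}, (Fin r → V) → V
  | 0, _ => 0
  | 1, w => w 0
  | (r + 2), w => nprod (fun i : Fin (r + 1) => w i.castSucc) * w (Fin.last (r + 1))

theorem nprod_mem_aux
    {F V : Type*} [Field F] [NonUnitalNonAssocRing V] [Module F V]
    (n : ℕ)
    (A : ℕ → ℤ → Submodule F V)
    (hmul : ∀ {k k' : ℕ} {l l' : ℤ} {x y : V}, 0 < k → 0 < k' →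
      x ∈ A k l → y ∈ A k' l' → x * y ∈ A (k + k') (l + l' - (n : ℤ))) :
    ∀ (r : ℕ) (k : Fin (r + 1) → ℕ) (l : Fin (r + 1) → ℤ) (w : Fin (r + 1) → V),
      (∀ i, 0 < k i) → (∀ i, w i ∈ A (k i) (l i)) →
      nprod w ∈ A (∑ i, k i) (∑ i, l i - (r : ℤ) * n) := by
  intro r
  induction r with
  | zero =>
    intro k l w hk hw
    simpa [nprod, Fin.sum_univ_one] using hw 0
  | succ r ih =>
    intro k l w hk hw
    have hK' : 0 < ∑ i : Fin (r + 1), k i.castSucc :=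
      Finset.sum_pos (fun i _ => hk _) Finset.univ_nonempty
    have h1 := ih (fun i => k i.castSucc) (fun i => l i.castSucc)
      (fun i => w i.castSucc) (fun i => hk _) (fun i => hw _)
    have h2 := hmul hK' (hk (Fin.last (r + 1))) h1 (hw (Fin.last (r + 1)))
    have hks : (∑ i : Fin (r + 1), k i.castSucc) + k (Fin.last (r + 1)) =
        ∑ i : Fin (r + 2), k i := (Fin.sum_univ_castSucc k).symm
    have hls : (∑ i : Fin (r + 1), l i.castSucc - (r : ℤ) * n) + l (Fin.last (r + 1))
        - (n : ℤ) = ∑ i : Fin (r + 2), l i - ((r : ℤ) + 1) * n := by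
      rw [Fin.sum_univ_castSucc l]; ring
    rw [hks, hls] at h2
    show nprod (fun i : Fin (r + 1) => w i.castSucc) * w (Fin.last (r + 1)) ∈ _
    have hcast : (((r : ℕ) + 1 : ℕ) : ℤ) = (r : ℤ) + 1 := by push_cast; ring
    rw [hcast]
    exact h2

theorem nprod_eq_zero_of_factor_zero
    {V : Type*} [MulZeroClass V] :
    ∀ (r : ℕ) (w : Fin r → V), (∃ j, w j = 0) → nprod w = 0 := by
  intro r
  induction r with
  | zero => intro w _; rfl
  | succ r ih =>
    intro w ⟨j, hj⟩
    match r with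
    | 0 =>
      have hj0 : j = 0 := Fin.ext (Nat.lt_one_iff.mp j.isLt)
      show w 0 = 0
      rw [← hj0]; exact hj
    | r + 1 =>
      show nprod (fun i : Fin (r + 1) => w i.castSucc) * w (Fin.last (r + 1)) = 0
      rcases Fin.eq_castSucc_or_eq_last j with ⟨j', rfl⟩ | rfl
      · rw [ih _ ⟨j', hj⟩, zero_mul]
      · rw [hj, mul_zero]

/-- A bigraded algebra over a field `F` with degree shift `n`, realized as a family of
`F`-subspaces `A k l` (for positive integers `k` and integers `l`) of an ambient
`F`-bilinear multiplicative structure `V`, with multiplication mapping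
`A k l × A k' l' → A (k+k') (l+l'-n)`.  If the support condition
`A k l ≠ 0 → k•Δ - n ≤ l < k•Δ + n` holds, then the algebra is non-uniformly
nilpotent: for every positive integer `N` there is a positive integer `m` such that
every product of `r ≥ m` homogeneous elements with all first degrees `k i ≤ N`
vanishes. -/
theorem bigraded_support_nonuniformly_nilpotent
    {F V : Type*} [Field F] [NonUnitalNonAssocRing V] [Module F V]
    [SMulCommClass F V V] [IsScalarTower F V V]
    (n : ℕ) (Δ : ℝ)
    (A : ℕ → ℤ → Submodule F V)
    (hmul : ∀ {k k' : ℕ} {l l' : ℤ} {x y : V}, 0 < k → 0 < k' →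
      x ∈ A k l → y ∈ A k' l' → x * y ∈ A (k + k') (l + l' - (n : ℤ)))
    (hsupp : ∀ (k : ℕ) (l : ℤ), 0 < k → A k l ≠ ⊥ →
      (k : ℝ) * Δ - (n : ℝ) ≤ (l : ℝ) ∧ (l : ℝ) < (k : ℝ) * Δ + (n : ℝ)) :
    ∀ N : ℕ, 0 < N → ∃ m : ℕ, 0 < m ∧ ∀ r : ℕ, m ≤ r →
      ∀ (k : Fin r → ℕ) (l : Fin r → ℤ) (w : Fin r → V),
        (∀ i, 0 < k i) → (∀ i, k i ≤ N) → (∀ i, w i ∈ A (k i) (l i)) →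
        nprod w = 0 := by
  intro N hN
  -- the set of relevant first degrees
  have hne : (Finset.Icc 1 N).Nonempty := ⟨1, by simp [Nat.one_le_iff_ne_zero, hN.ne']⟩
  -- ε : the minimal "gap"  k Δ + n + 1 - ⌈k Δ + n⌉  over k ∈ [1, N]
  set ε : ℝ := (Finset.Icc 1 N).inf' hne
      (fun k => (k : ℝ) * Δ + (n : ℝ) + 1 - (⌈(k : ℝ) * Δ + (n : ℝ)⌉ : ℝ)) with hε
  have hεpos : 0 < ε := by
    rw [hε, Finset.lt_inf'_iff]
    intro k _
    have := Int.ceil_lt_add_one ((k : ℝ) * Δ + (n : ℝ))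
    linarith
  -- key: any integer l strictly below k Δ + n is at most k Δ + n - ε
  have hgap : ∀ k : ℕ, 0 < k → k ≤ N → ∀ l : ℤ, (l : ℝ) < (k : ℝ) * Δ + (n : ℝ) →
      (l : ℝ) ≤ (k : ℝ) * Δ + (n : ℝ) - ε := by
    intro k hk hkN l hl
    have h1 : l < ⌈(k : ℝ) * Δ + (n : ℝ)⌉ := Int.lt_ceil.mpr hl
    have h2 : (l : ℝ) ≤ (⌈(k : ℝ) * Δ + (n : ℝ)⌉ : ℝ) - 1 := by
      have : l ≤ ⌈(k : ℝ) * Δ + (n : ℝ)⌉ - 1 := by omega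
      calc (l : ℝ) ≤ ((⌈(k : ℝ) * Δ + (n : ℝ)⌉ - 1 : ℤ) : ℝ) := by exact_mod_cast this
        _ = (⌈(k : ℝ) * Δ + (n : ℝ)⌉ : ℝ) - 1 := by push_cast; ring
    have h3 : ε ≤ (k : ℝ) * Δ + (n : ℝ) + 1 - (⌈(k : ℝ) * Δ + (n : ℝ)⌉ : ℝ) := by
      rw [hε]
      exact Finset.inf'_le _ (Finset.mem_Icc.mpr ⟨hk, hkN⟩)
    linarith
  refine ⟨⌈(2 * n : ℝ) / ε⌉₊ + 1, Nat.succ_pos _, ?_⟩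
  intro r hr k l w hk hkN hw
  -- r ≥ 1, so write r = r' + 1
  obtain ⟨r', rfl⟩ : ∃ r', r = r' + 1 := ⟨r - 1, by omega⟩
  by_contra hne0
  -- no factor is zero, hence each A (k i) (l i) is nonzero
  have hwne : ∀ i, w i ≠ 0 := by
    intro i hi
    exact hne0 (nprod_eq_zero_of_factor_zero _ w ⟨i, hi⟩)
  have hAne : ∀ i, A (k i) (l i) ≠ ⊥ := by
    intro i hbot
    exact hwne i (by simpa [hbot] using hw i)
  -- each l i ≤ k i Δ + n - ε
  have hli : ∀ i, (l i : ℝ) ≤ (k i : ℝ) * Δ + (n : ℝ) - ε := fun i =>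
    hgap (k i) (hk i) (hkN i) (l i) (hsupp (k i) (l i) (hk i) (hAne i)).2
  -- the product lies in A K L
  have hmem := nprod_mem_aux n A @hmul r' k l w hk hw
  have hKpos : 0 < ∑ i, k i := Finset.sum_pos (fun i _ => hk _) Finset.univ_nonempty
  have hAKL : A (∑ i, k i) (∑ i, l i - (r' : ℤ) * n) ≠ ⊥ := by
    intro hbot
    exact hne0 (by simpa [hbot] using hmem)
  have hlow := (hsupp _ _ hKpos hAKL).1
  -- sum the upper bounds
  have hsum : ((∑ i, l i : ℤ) : ℝ) ≤ (((∑ i, k i : ℕ)) : ℝ) * Δ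
      + (r' + 1 : ℝ) * ((n : ℝ) - ε) := by
    push_cast
    calc (∑ i, (l i : ℝ)) ≤ ∑ i : Fin (r' + 1), ((k i : ℝ) * Δ + (n : ℝ) - ε) :=
          Finset.sum_le_sum (fun i _ => hli i)
      _ = (∑ i, (k i : ℝ)) * Δ + (r' + 1 : ℝ) * ((n : ℝ) - ε) := by
          simp_rw [show ∀ i : Fin (r' + 1), (k i : ℝ) * Δ + (n : ℝ) - ε
              = (k i : ℝ) * Δ + ((n : ℝ) - ε) from fun i => by ring,
            Finset.sum_add_distrib, ← Finset.sum_mul, Finset.sum_const,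
            Finset.card_univ, Fintype.card_fin, nsmul_eq_mul]
          push_cast
          ring
  -- r > 2n / ε
  have hrε : (2 * n : ℝ) < (r' + 1 : ℝ) * ε := by
    have h1 : (2 * n : ℝ) / ε ≤ (⌈(2 * n : ℝ) / ε⌉₊ : ℝ) := Nat.le_ceil _
    have h2 : (⌈(2 * n : ℝ) / ε⌉₊ : ℝ) + 1 ≤ (r' + 1 : ℝ) := by
      exact_mod_cast hr
    have : (2 * n : ℝ) / ε < (r' + 1 : ℝ) := by linarith
    calc (2 * n : ℝ) = (2 * n : ℝ) / ε * ε := by field_simp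
      _ < (r' + 1 : ℝ) * ε := by exact mul_lt_mul_of_pos_right this hεpos
  -- derive contradiction
  have hcast : ((∑ i, l i - (r' : ℤ) * n : ℤ) : ℝ)
      = ((∑ i, l i : ℤ) : ℝ) - (r' : ℝ) * n := by push_cast; ring
  rw [hcast] at hlow
  nlinarith [hlow, hsum, hrε]
end

section
/- Let F be a field, n a natural number, and Δ a real number. Suppose given a bigraded algebra over F with degree shift n, i.e. F-vector spaces A(k,l) for each positive integer k and each integer l, together with F-bilinear multiplication maps A(k,l) × A(k',l') → A(k+k', l+l'−n). Assume that for every positive integer k there is a real number δ_k > 0 such that A(k,l) ≠ 0 implies kΔ − n ≤ l ≤ kΔ + n − δ_k. Fix a positive integer N and set δ = min{δ_k : 1 ≤ k ≤ N}. Then for every positive integer r with r·δ > 2n and all homogeneous elements w_1,…,w_r with w_i ∈ A(k_i,l_i) and k_i ≤ N for all i, the product w_1·w_2·⋯·w_r is zero. -/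
open Finset

lemma nprod_eq_zero_of_eq_zero {V : Type*} [MulZeroClass V] :
    ∀ {r : ℕ} (w : Fin r → V) (i : Fin r), w i = 0 → nprod w = 0
  | 0, _, _, _ => rfl
  | 1, w, i, hi => by
    show w 0 = 0
    rwa [Subsingleton.elim (0 : Fin 1) i]
  | r + 2, w, i, hi => by
    show nprod (fun j : Fin (r + 1) => w j.castSucc) * w (Fin.last (r + 1)) = 0
    rcases eq_or_ne i (Fin.last (r + 1)) with rfl | h
    · rw [hi, mul_zero]
    · obtain ⟨j, rfl⟩ := Fin.exists_castSucc_eq.mpr h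
      rw [nprod_eq_zero_of_eq_zero _ j hi, zero_mul]

lemma nprod_mem {F V : Type*} [Semiring F] [NonUnitalNonAssocSemiring V] [Module F V]
    (n : ℕ) (A : ℕ → ℤ → Submodule F V)
    (hmul : ∀ {k k' : ℕ} {l l' : ℤ} {x y : V}, 0 < k → 0 < k' →
      x ∈ A k l → y ∈ A k' l' → x * y ∈ A (k + k') (l + l' - (n : ℤ))) :
    ∀ {r : ℕ} (k : Fin (r + 1) → ℕ) (l : Fin (r + 1) → ℤ) (w : Fin (r + 1) → V),
      (∀ i, 0 < k i) → (∀ i, w i ∈ A (k i) (l i)) →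
      nprod w ∈ A (∑ i, k i) (∑ i, l i - r * n)
  | 0, k, l, w, _, hw => by
    show w 0 ∈ _
    simpa using hw 0
  | r + 1, k, l, w, hk, hw => by
    have hinit := nprod_mem n A hmul (fun i => k i.castSucc) (fun i => l i.castSucc)
      (fun i => w i.castSucc) (fun i => hk _) (fun i => hw _)
    have hinit_pos : 0 < ∑ i : Fin (r + 1), k i.castSucc :=
      sum_pos (fun i _ => hk i.castSucc) univ_nonempty
    show nprod (fun j : Fin (r + 1) => w j.castSucc) * w (Fin.last (r + 1)) ∈ _
    convert hmul hinit_pos (hk _) hinit (hw _) using 2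
    · rw [Fin.sum_univ_castSucc]
    · rw [Fin.sum_univ_castSucc]; push_cast; ring

lemma sum_le_sum_mul_add_card_mul {ι : Type*} (s : Finset ι) (k : ι → ℕ) (l : ι → ℤ)
    (Δ c : ℝ) (h : ∀ i ∈ s, (l i : ℝ) ≤ k i * Δ + c) :
    ((∑ i ∈ s, l i : ℤ) : ℝ) ≤ (∑ i ∈ s, k i : ℕ) * Δ + #s * c := by
  push_cast
  calc ∑ i ∈ s, (l i : ℝ) ≤ ∑ i ∈ s, ((k i : ℝ) * Δ + c) := sum_le_sum h
    _ = (∑ i ∈ s, (k i : ℝ)) * Δ + #s * c := by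
      rw [sum_add_distrib, sum_mul, sum_const, nsmul_eq_mul]

theorem bigraded_support_quantitative_nilpotent_general
    {F V : Type*} [Field F] [NonUnitalNonAssocRing V] [Module F V]
    (n : ℕ) (Δ : ℝ)
    (A : ℕ → ℤ → Submodule F V)
    (hmul : ∀ {k k' : ℕ} {l l' : ℤ} {x y : V}, 0 < k → 0 < k' →
      x ∈ A k l → y ∈ A k' l' → x * y ∈ A (k + k') (l + l' - (n : ℤ)))
    (δ : ℕ → ℝ)
    (hsupp : ∀ (k : ℕ) (l : ℤ), 0 < k → A k l ≠ ⊥ →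
      (k : ℝ) * Δ - (n : ℝ) ≤ (l : ℝ) ∧ (l : ℝ) ≤ (k : ℝ) * Δ + (n : ℝ) - δ k)
    (N : ℕ) (hN : 0 < N) :
    ∀ r : ℕ, 0 < r →
      2 * (n : ℝ) < (r : ℝ) * ((Finset.Icc 1 N).inf' ⟨1, Finset.mem_Icc.mpr ⟨le_refl 1, hN⟩⟩ δ) →
      ∀ (k : Fin r → ℕ) (l : Fin r → ℤ) (w : Fin r → V),
        (∀ i, 0 < k i) → (∀ i, k i ≤ N) → (∀ i, w i ∈ A (k i) (l i)) →
        nprod w = 0 := by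
  intro r hr hrδ k l w hk hkN hw
  obtain ⟨r, rfl⟩ := Nat.exists_eq_add_one_of_ne_zero hr.ne'
  set d := (Icc 1 N).inf' ⟨1, mem_Icc.mpr ⟨le_refl 1, hN⟩⟩ δ
  by_contra hne
  have hupper (i : Fin (r + 1)) : (l i : ℝ) ≤ k i * Δ + (n - d) := by
    have hwi : w i ≠ 0 := fun h => hne (nprod_eq_zero_of_eq_zero w i h)
    have hsupp_i := (hsupp _ _ (hk i) ((Submodule.ne_bot_iff _).mpr ⟨_, hw i, hwi⟩)).2
    have hd : d ≤ δ (k i) := inf'_le δ (mem_Icc.mpr ⟨hk i, hkN i⟩)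
    linarith
  have hK : 0 < ∑ i, k i := sum_pos (fun i _ => hk i) univ_nonempty
  have hlower := (hsupp _ _ hK
    ((Submodule.ne_bot_iff _).mpr ⟨_, nprod_mem n A hmul k l w hk hw, hne⟩)).1
  have hsum := sum_le_sum_mul_add_card_mul univ k l Δ (n - d) fun i _ => hupper i
  rw [card_univ, Fintype.card_fin] at hsum
  push_cast at hlower hsum hrδ
  linarith

/-- Quantitative form of non-uniform nilpotency for a bigraded algebra with degree
shift `n` over a field `F` (realized as `F`-subspaces `A k l` of an ambient
`F`-bilinear multiplicative structure `V`): if for every positive integer `k` there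
is `δ k > 0` with `A k l ≠ 0 → k•Δ - n ≤ l ≤ k•Δ + n - δ k`, and `N` is a fixed
positive integer with `δmin = min {δ k : 1 ≤ k ≤ N}`, then every product of `r`
homogeneous elements with all first degrees `k i ≤ N` vanishes as soon as
`r * δmin > 2 * n`. -/
theorem bigraded_support_quantitative_nilpotent
    {F V : Type*} [Field F] [NonUnitalNonAssocRing V] [Module F V]
    [SMulCommClass F V V] [IsScalarTower F V V]
    (n : ℕ) (Δ : ℝ)
    (A : ℕ → ℤ → Submodule F V)
    (hmul : ∀ {k k' : ℕ} {l l' : ℤ} {x y : V}, 0 < k → 0 < k' →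
      x ∈ A k l → y ∈ A k' l' → x * y ∈ A (k + k') (l + l' - (n : ℤ)))
    (δ : ℕ → ℝ) (hδ : ∀ k : ℕ, 0 < k → 0 < δ k)
    (hsupp : ∀ (k : ℕ) (l : ℤ), 0 < k → A k l ≠ ⊥ →
      (k : ℝ) * Δ - (n : ℝ) ≤ (l : ℝ) ∧ (l : ℝ) ≤ (k : ℝ) * Δ + (n : ℝ) - δ k)
    (N : ℕ) (hN : 0 < N) :
    ∀ r : ℕ, 0 < r →
      2 * (n : ℝ) < (r : ℝ) * ((Finset.Icc 1 N).inf' ⟨1, Finset.mem_Icc.mpr ⟨le_refl 1, hN⟩⟩ δ) →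
      ∀ (k : Fin r → ℕ) (l : Fin r → ℤ) (w : Fin r → V),
        (∀ i, 0 < k i) → (∀ i, k i ≤ N) → (∀ i, w i ∈ A (k i) (l i)) →
        nprod w = 0 :=
  bigraded_support_quantitative_nilpotent_general n Δ A hmul δ hsupp N hN
end

section
/- Let R be a non-unital commutative ring graded by the positive integers, i.e. equipped with additive subgroups R_k for each positive integer k whose internal direct sum is R and which satisfy R_k · R_{k'} ⊆ R_{k+k'}. Suppose there is a finite chain of homogeneous two-sided ideals 0 = I_0 ⊆ I_1 ⊆ … ⊆ I_s = R with the following property: for each j with 1 ≤ j ≤ s and every positive integer N, there exists a positive integer m such that every product of m homogeneous elements of I_j, each of degree at most N, lies in I_{j−1}. Then R is non-uniformly nilpotent: for every positive integer N there exists a positive integer m such that every product of m homogeneous elements of R, each of degree at most N, is zero. -/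
lemma nprod_succ' {V : Type*} [Mul V] [Zero V] {r : ℕ} (hr : 0 < r) (w : Fin (r + 1) → V) :
    nprod w = nprod (fun i : Fin r => w i.castSucc) * w (Fin.last r) := by
  obtain ⟨r, rfl⟩ := Nat.exists_eq_succ_of_ne_zero hr.ne'
  rfl

lemma nprod_add' {R : Type*} [NonUnitalCommRing R] (a : ℕ) (ha : 0 < a) (b : ℕ) (hb : 0 < b)
    (w : Fin (a + b) → R) :
    nprod w = nprod (fun i : Fin a => w (Fin.castAdd b i)) *
      nprod (fun j : Fin b => w (Fin.natAdd a j)) := by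
  induction b with
  | zero => omega
  | succ b ih =>
    rcases Nat.eq_zero_or_pos b with rfl | hb'
    · rw [nprod_succ' ha]
      congr 1
    · rw [nprod_succ' (show 0 < a + b by omega) w,
        ih hb' (fun i => w i.castSucc),
        nprod_succ' hb' (fun j : Fin (b + 1) => w (Fin.natAdd a j)),
        mul_assoc]
      rfl

def blockIdx' {m' k : ℕ} (i : Fin k) (j : Fin m') : Fin (m' * k) :=
  ⟨(i : ℕ) * m' + j, by
    calc (i : ℕ) * m' + (j : ℕ) < (i : ℕ) * m' + m' := by omega
    _ = ((i : ℕ) + 1) * m' := by ring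
    _ ≤ k * m' := Nat.mul_le_mul_right _ i.2
    _ = m' * k := Nat.mul_comm _ _⟩

lemma nprod_cast' {V : Type*} [Mul V] [Zero V] {a b : ℕ} (h : b = a) (w : Fin a → V) :
    nprod (fun i : Fin b => w (Fin.cast h i)) = nprod w := by
  subst h; rfl

lemma nprod_blocks' {R : Type*} [NonUnitalCommRing R] (m' : ℕ) (hm' : 0 < m')
    (k : ℕ) (hk : 0 < k) (w : Fin (m' * k) → R) :
    nprod (fun i : Fin k => nprod (fun j : Fin m' => w (blockIdx' i j))) = nprod w := by
  induction k with
  | zero => omega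
  | succ k ih =>
    rcases Nat.eq_zero_or_pos k with rfl | hk'
    · show nprod (fun j : Fin m' => w (blockIdx' 0 j)) = nprod w
      rw [← nprod_cast' (show m' = m' * 1 by omega) w]
      congr 1
      funext j
      congr 1
      ext
      simp [blockIdx']
    · rw [nprod_succ' hk', nprod_add' (m' * k) (by positivity) m' hm' w,
        ← ih hk' (fun i => w (Fin.castAdd m' i))]
      have h2 : (fun j : Fin m' => w (blockIdx' (Fin.last k) j)) =
          fun j => w (Fin.natAdd (m' * k) j) := by
        funext j
        congr 1
        ext
        simp [blockIdx', Nat.mul_comm]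
      rw [h2]
      congr 1

lemma nprod_deg' {R : Type*} [NonUnitalCommRing R] (G : ℕ+ → AddSubgroup R)
    (hmul : ∀ {k k' : ℕ+} {x y : R}, x ∈ G k → y ∈ G k' → x * y ∈ G (k + k'))
    (N : ℕ+) (r : ℕ) (hr : 0 < r) (d : Fin r → ℕ+) (w : Fin r → R)
    (hd : ∀ i, d i ≤ N) (hw : ∀ i, w i ∈ G (d i)) :
    ∃ D : ℕ+, (D : ℕ) ≤ r * (N : ℕ) ∧ nprod w ∈ G D := by
  induction r with
  | zero => omega
  | succ r ih =>
    rcases Nat.eq_zero_or_pos r with rfl | hr'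
    · refine ⟨d 0, ?_, hw 0⟩
      have h : ((d 0 : ℕ)) ≤ (N : ℕ) := by exact_mod_cast hd 0
      omega
    · obtain ⟨D, hD1, hD2⟩ := ih hr' (fun i => d i.castSucc) (fun i => w i.castSucc)
        (fun i => hd _) (fun i => hw _)
      refine ⟨D + d (Fin.last r), ?_, ?_⟩
      · have h1 : ((d (Fin.last r) : ℕ)) ≤ (N : ℕ) := by exact_mod_cast hd (Fin.last r)
        rw [PNat.add_coe, Nat.succ_mul]
        omega
      · rw [nprod_succ' hr']
        exact hmul hD2 (hw (Fin.last r))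

/-- Let `R` be a non-unital commutative ring graded by the positive integers
(additive subgroups `G k`, `k : ℕ+`, with internal direct sum `R` and
`G k * G k' ⊆ G (k + k')`).  Suppose there is a finite chain of homogeneous
two-sided ideals `⊥ = I 0 ⊆ I 1 ⊆ … ⊆ I s = ⊤` such that for each `j` with
`1 ≤ j ≤ s` and every positive integer `N` there is a positive integer `m` such
that every product of `m` homogeneous elements of `I j` of degrees at most `N`
lies in `I (j-1)`.  Then `R` is non-uniformly nilpotent: for every positive
integer `N` there is a positive integer `m` such that every product of `m`
homogeneous elements of `R` of degrees at most `N` is zero. -/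
theorem graded_ring_chain_of_ideals_nonuniformly_nilpotent
    {R : Type*} [NonUnitalCommRing R]
    (G : ℕ+ → AddSubgroup R)
    (hG : DirectSum.IsInternal G)
    (hmul : ∀ {k k' : ℕ+} {x y : R}, x ∈ G k → y ∈ G k' → x * y ∈ G (k + k'))
    (s : ℕ)
    (I : Fin (s + 1) → AddSubgroup R)
    (hI0 : I 0 = ⊥)
    (hIs : I (Fin.last s) = ⊤)
    (hchain : ∀ j : Fin s, I j.castSucc ≤ I j.succ)
    (hI_right : ∀ (j : Fin (s + 1)) (x y : R), x ∈ I j → x * y ∈ I j)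
    (hI_left : ∀ (j : Fin (s + 1)) (x y : R), x ∈ I j → y * x ∈ I j)
    (hI_homog : ∀ j : Fin (s + 1), I j = ⨆ d : ℕ+, I j ⊓ G d)
    (hstep : ∀ (j : Fin s) (N : ℕ+), ∃ m : ℕ+,
      ∀ (d : Fin (m : ℕ) → ℕ+) (w : Fin (m : ℕ) → R),
        (∀ i, d i ≤ N) → (∀ i, w i ∈ I j.succ) → (∀ i, w i ∈ G (d i)) →
        nprod w ∈ I j.castSucc) :
    ∀ N : ℕ+, ∃ m : ℕ+,
      ∀ (d : Fin (m : ℕ) → ℕ+) (w : Fin (m : ℕ) → R),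
        (∀ i, d i ≤ N) → (∀ i, w i ∈ G (d i)) → nprod w = 0 := by
  have key : ∀ t : ℕ, ∀ N : ℕ+, ∃ m : ℕ+,
      ∀ (d : Fin (m : ℕ) → ℕ+) (w : Fin (m : ℕ) → R),
        (∀ i, d i ≤ N) → (∀ i, w i ∈ G (d i)) →
        nprod w ∈ I ⟨s - t, by omega⟩ := by
    intro t
    induction t with
    | zero =>
      intro N
      refine ⟨1, fun d w _ _ => ?_⟩
      have hlast : (⟨s - 0, by omega⟩ : Fin (s + 1)) = Fin.last s := by
        ext; simp
      rw [hlast, hIs]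
      trivial
    | succ t ih =>
      intro N
      rcases le_or_gt s t with hst | hst
      · -- degenerate: s - (t+1) = s - t = 0
        obtain ⟨m, hm⟩ := ih N
        refine ⟨m, fun d w hd hw => ?_⟩
        have he : (⟨s - t, by omega⟩ : Fin (s + 1)) = ⟨s - (t + 1), by omega⟩ := by
          ext; simp; omega
        rw [← he]
        exact hm d w hd hw
      · -- real step
        obtain ⟨m', hm'⟩ := ih N
        set j : Fin s := ⟨s - t - 1, by omega⟩ with hj
        have hjsucc : j.succ = (⟨s - t, by omega⟩ : Fin (s + 1)) := by
          ext; simp [hj]; omega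
        have hjcast : j.castSucc = (⟨s - (t + 1), by omega⟩ : Fin (s + 1)) := by
          ext; simp [hj]; omega
        obtain ⟨m, hm⟩ := hstep j (m' * N)
        refine ⟨m' * m, fun d w hd hw => ?_⟩
        -- w : Fin ((m' * m : ℕ+) : ℕ) → R, and ((m' * m : ℕ+) : ℕ) = (m' : ℕ) * (m : ℕ)
        let w' : Fin ((m' : ℕ) * (m : ℕ)) → R := w
        let d' : Fin ((m' : ℕ) * (m : ℕ)) → ℕ+ := d
        have hw' : ∀ i, w' i ∈ G (d' i) := hw
        have hd' : ∀ i, d' i ≤ N := hd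
        -- block products
        have hblock : ∀ i : Fin (m : ℕ), ∃ D : ℕ+, (D : ℕ) ≤ (m' : ℕ) * (N : ℕ) ∧
            nprod (fun jj : Fin (m' : ℕ) => w' (blockIdx' i jj)) ∈ G D := by
          intro i
          exact nprod_deg' G hmul N (m' : ℕ) m'.2 (fun jj => d' (blockIdx' i jj))
            (fun jj => w' (blockIdx' i jj)) (fun jj => hd' _) (fun jj => hw' _)
        choose D hD1 hD2 using hblock
        have hP : ∀ i : Fin (m : ℕ),
            nprod (fun jj : Fin (m' : ℕ) => w' (blockIdx' i jj)) ∈ I j.succ := by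
          intro i
          rw [hjsucc]
          exact hm' (fun jj => d' (blockIdx' i jj)) (fun jj => w' (blockIdx' i jj))
            (fun jj => hd' _) (fun jj => hw' _)
        have hD1' : ∀ i, D i ≤ m' * N := by
          intro i
          have := hD1 i
          rw [← PNat.coe_le_coe, PNat.mul_coe]
          exact this
        have hmain := hm D (fun i => nprod (fun jj : Fin (m' : ℕ) => w' (blockIdx' i jj)))
          hD1' hP hD2
        rw [nprod_blocks' (m' : ℕ) m'.2 (m : ℕ) m.2 w'] at hmain
        rw [hjcast] at hmain
        exact hmain
  intro N
  obtain ⟨m, hm⟩ := key s N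
  refine ⟨m, fun d w hd hw => ?_⟩
  have h := hm d w hd hw
  have he : (⟨s - s, by omega⟩ : Fin (s + 1)) = 0 := by
    ext; simp
  rw [he, hI0, AddSubgroup.mem_bot] at h
  exact h
end

section
/- Let R be a non-unital ring graded by the positive integers, i.e. equipped with additive subgroups R_k for each positive integer k whose internal direct sum is R and which satisfy R_k · R_{k'} ⊆ R_{k+k'}. Let S be an index set and suppose each R_k decomposes as an internal direct sum of additive subgroups R_k = ⊕_{i∈S} R_k^i such that for all i, j ∈ S and all k, k': R_k^i · R_{k'}^j ⊆ R_{k+k'}^i when i = j, and R_k^i · R_{k'}^j = 0 when i ≠ j. Assume: (i) for each i ∈ S, the graded subring R^i = ⊕_k R_k^i is non-uniformly nilpotent, i.e. for every N there exists m such that every product of m elements taken from the R_k^i with k ≤ N is zero; and (ii) for every positive integer N, the set { i ∈ S : R_k^i ≠ 0 for some k ≤ N } is finite. Then R is non-uniformly nilpotent: for every positive integer N there exists a positive integer m such that every product of m homogeneous elements of R of degrees at most N is zero. -/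
lemma nprod_snoc {V : Type*} [Mul V] [Zero V] {r : ℕ} (w : Fin (r + 1) → V) (y : V) :
    nprod (Fin.snoc w y) = nprod w * y := by
  show nprod (fun i : Fin (r + 1) => (Fin.snoc w y : Fin (r+2) → V) i.castSucc)
      * (Fin.snoc w y : Fin (r+2) → V) (Fin.last (r+1)) = nprod w * y
  simp only [Fin.snoc_castSucc, Fin.snoc_last]

lemma nprod_prefix_zero {V : Type*} [MulZeroClass V] {s : ℕ} (hs : 1 ≤ s) :
    ∀ {r : ℕ} (h : s ≤ r) (w : Fin r → V),
      nprod (fun t : Fin s => w (Fin.castLE h t)) = 0 → nprod w = 0 := by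
  intro r
  induction r with
  | zero => intro h; omega
  | succ u ih =>
    intro h w h0
    rcases eq_or_lt_of_le h with heq | hlt
    · subst heq
      have he : (fun t : Fin (u + 1) => w (Fin.castLE h t)) = w :=
        funext fun t => congrArg w (Fin.ext rfl)
      rwa [he] at h0
    · have hsu : s ≤ u := Nat.lt_succ_iff.mp hlt
      obtain ⟨v, rfl⟩ : ∃ v, u = v + 1 := ⟨u - 1, by omega⟩
      have hp : nprod (fun i : Fin (v + 1) => w i.castSucc) = 0 := by
        apply ih hsu
        have he : (fun t : Fin s => (fun i : Fin (v+1) => w i.castSucc) (Fin.castLE hsu t))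
            = fun t : Fin s => w (Fin.castLE h t) :=
          funext fun t => congrArg w (Fin.ext rfl)
        rwa [he]
      show nprod (fun i : Fin (v + 1) => w i.castSucc) * w (Fin.last (v+1)) = 0
      rw [hp, zero_mul]

/-- Let `R` be a non-unital ring graded by the positive integers (additive
subgroups `G k`, `k : ℕ+`, with internal direct sum `R` and
`G k * G k' ⊆ G (k + k')`).  Suppose each `G k` decomposes as the internal direct
sum of additive subgroups `P i k` (`i` ranging over an index set `S`) such that
products within the same index `i` land in `P i (k + k')` and products across
distinct indices vanish.  If each graded subring `⊕_k P i k` is non-uniformly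
nilpotent and, for each positive integer `N`, only finitely many indices `i` have
`P i k ≠ ⊥` for some `k ≤ N`, then `R` is non-uniformly nilpotent: for every
positive integer `N` there is a positive integer `m` such that every product of
`m` homogeneous elements of `R` of degrees at most `N` is zero. -/
theorem graded_ring_orthogonal_splitting_nonuniformly_nilpotent
    {R : Type*} [NonUnitalRing R]
    (G : ℕ+ → AddSubgroup R)
    (hG : DirectSum.IsInternal G)
    (hmulG : ∀ {k k' : ℕ+} {x y : R}, x ∈ G k → y ∈ G k' → x * y ∈ G (k + k'))
    {S : Type*}
    (P : S → ℕ+ → AddSubgroup R)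
    (hle : ∀ (i : S) (k : ℕ+), P i k ≤ G k)
    (hindep : ∀ k : ℕ+, iSupIndep (fun i : S => P i k))
    (hsup : ∀ k : ℕ+, (⨆ i : S, P i k) = G k)
    (hmul_same : ∀ (i : S) {k k' : ℕ+} {x y : R},
      x ∈ P i k → y ∈ P i k' → x * y ∈ P i (k + k'))
    (hmul_diff : ∀ (i j : S), i ≠ j → ∀ {k k' : ℕ+} {x y : R},
      x ∈ P i k → y ∈ P j k' → x * y = 0)
    (hnil : ∀ (i : S) (N : ℕ+), ∃ m : ℕ+,
      ∀ (d : Fin (m : ℕ) → ℕ+) (w : Fin (m : ℕ) → R),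
        (∀ t, d t ≤ N) → (∀ t, w t ∈ P i (d t)) → nprod w = 0)
    (hfin : ∀ N : ℕ+, {i : S | ∃ k : ℕ+, k ≤ N ∧ P i k ≠ ⊥}.Finite) :
    ∀ N : ℕ+, ∃ m : ℕ+,
      ∀ (d : Fin (m : ℕ) → ℕ+) (w : Fin (m : ℕ) → R),
        (∀ t, d t ≤ N) → (∀ t, w t ∈ G (d t)) → nprod w = 0 := by
  intro N
  choose M hM using hnil
  -- subgroup generated by products of `r` homogeneous `i`-elements of degrees ≤ N
  let T : S → ℕ → AddSubgroup R := fun i r => AddSubgroup.closure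
    {x | ∃ (d : Fin r → ℕ+) (v : Fin r → R),
      (∀ t, d t ≤ N) ∧ (∀ t, v t ∈ P i (d t)) ∧ nprod v = x}
  -- products of same-index elements are homogeneous of some index-`i` component
  have hPmem : ∀ (i : S) (r : ℕ) (d : Fin (r+1) → ℕ+) (v : Fin (r+1) → R),
      (∀ t, v t ∈ P i (d t)) → ∃ K : ℕ+, nprod v ∈ P i K := by
    intro i r
    induction r with
    | zero => intro d v hv; exact ⟨d 0, hv 0⟩
    | succ u ih =>
      intro d v hv
      obtain ⟨K, hK⟩ := ih (fun t => d t.castSucc) (fun t => v t.castSucc) (fun t => hv _)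
      exact ⟨K + d (Fin.last _), hmul_same i hK (hv _)⟩
  -- multiplication step
  have hstep : ∀ (r : ℕ) {k : ℕ+}, k ≤ N → ∀ {x y : R},
      x ∈ (⨆ i, T i (r+1)) → y ∈ G k → x * y ∈ (⨆ i, T i (r+2)) := by
    intro r k hk x y hx hy
    rw [← hsup k] at hy
    refine AddSubgroup.iSup_induction (C := fun y => x * y ∈ (⨆ i, T i (r+2)))
      (fun j => P j k) hy ?_ (by show x * 0 ∈ _; rw [mul_zero]; exact zero_mem _)
      (fun a b ha hb => by show x * (a + b) ∈ _; rw [mul_add]; exact add_mem ha hb)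
    intro j y hyj
    refine AddSubgroup.iSup_induction (C := fun x => x * y ∈ (⨆ i, T i (r+2)))
      (fun i => T i (r+1)) hx ?_ (by show (0 : R) * y ∈ _; rw [zero_mul]; exact zero_mem _)
      (fun a b ha hb => by show (a + b) * y ∈ _; rw [add_mul]; exact add_mem ha hb)
    intro i x hxi
    refine AddSubgroup.closure_induction
      (p := fun x _ => x * y ∈ (⨆ i, T i (r+2))) ?_
      (by show (0 : R) * y ∈ _; rw [zero_mul]; exact zero_mem _)
      (fun a b _ _ ha hb => by show (a + b) * y ∈ _; rw [add_mul]; exact add_mem ha hb)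
      (fun a _ ha => by show (-a) * y ∈ _; rw [neg_mul]; exact neg_mem ha) hxi
    rintro x ⟨d, v, hd, hv, rfl⟩
    by_cases hij : i = j
    · subst hij
      rw [← nprod_snoc v y]
      refine AddSubgroup.mem_iSup_of_mem i (AddSubgroup.subset_closure
        ⟨Fin.snoc d k, Fin.snoc v y, ?_, ?_, rfl⟩)
      · intro t
        refine Fin.lastCases ?_ ?_ t
        · simpa using hk
        · intro t'; simpa using hd t'
      · intro t
        refine Fin.lastCases ?_ ?_ t
        · simpa using hyj
        · intro t'; simpa using hv t'
    · obtain ⟨K, hK⟩ := hPmem i r d v hv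
      rw [hmul_diff i j hij hK hyj]
      exact zero_mem _
  -- every product of homogeneous elements lies in the sup of the `T`s
  have hmem : ∀ (r : ℕ) (d : Fin (r+1) → ℕ+) (w : Fin (r+1) → R),
      (∀ t, d t ≤ N) → (∀ t, w t ∈ G (d t)) → nprod w ∈ (⨆ i, T i (r+1)) := by
    intro r
    induction r with
    | zero =>
      intro d w hd hw
      have h0 : w 0 ∈ ⨆ i, P i (d 0) := by rw [hsup]; exact hw 0
      have hle1 : (⨆ i, P i (d 0)) ≤ ⨆ i, T i 1 := by
        refine iSup_mono fun i => ?_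
        intro x hx
        exact AddSubgroup.subset_closure
          ⟨fun _ => d 0, fun _ => x, fun _ => hd 0, fun _ => hx, rfl⟩
      exact hle1 h0
    | succ u ih =>
      intro d w hd hw
      have hp := ih (fun t => d t.castSucc) (fun t => w t.castSucc)
        (fun t => hd _) (fun t => hw _)
      exact hstep u (hd (Fin.last _)) hp (hw (Fin.last _))
  -- choose a uniform bound
  set F := (hfin N).toFinset with hF
  set mn : ℕ := F.sup (fun i => (M i N : ℕ)) with hmn
  refine ⟨⟨mn + 1, Nat.succ_pos _⟩, ?_⟩
  intro d w hd hw
  have hT : ∀ i, T i (mn + 1) = ⊥ := by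
    intro i
    rw [eq_bot_iff]
    refine (AddSubgroup.closure_le ⊥).mpr ?_
    rintro x ⟨d', v, hd', hv, rfl⟩
    simp only [SetLike.mem_coe, AddSubgroup.mem_bot]
    by_cases hi : ∃ k : ℕ+, k ≤ N ∧ P i k ≠ ⊥
    · have hiF : i ∈ F := (Set.Finite.mem_toFinset _).mpr hi
      have hsle : ((M i N : ℕ+) : ℕ) ≤ mn + 1 := by
        have h2 : (M i N : ℕ) ≤ F.sup (fun i => (M i N : ℕ)) :=
          Finset.le_sup (f := fun i => (M i N : ℕ)) hiF
        omega
      refine nprod_prefix_zero (M i N).one_le hsle v ?_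
      exact hM i N (fun t => d' (Fin.castLE hsle t)) (fun t => v (Fin.castLE hsle t))
        (fun t => hd' _) (fun t => hv _)
    · push_neg at hi
      have hv0 : v 0 = 0 := by
        have := hv 0
        rw [hi (d' 0) (hd' 0), AddSubgroup.mem_bot] at this
        exact this
      refine nprod_prefix_zero le_rfl (by omega : 1 ≤ mn + 1) v ?_
      show v (Fin.castLE _ 0) = 0
      have : Fin.castLE (by omega : 1 ≤ mn + 1) (0 : Fin 1) = (0 : Fin (mn + 1)) :=
        Fin.ext rfl
      rw [this, hv0]
  have hbot : (⨆ i, T i (mn + 1)) = ⊥ := by simp [hT]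
  have := hmem mn d w hd hw
  rw [hbot, AddSubgroup.mem_bot] at this
  exact this
end
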